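/- arXiv:1403.6783 — 5 statements merged into one kernel-verified Lean document; each statement's English description precedes it below -/
import Mathlib

section
/- Let A, B : ℝ² → ℝ and C : ℝ → ℝ be smooth functions with the following property: for every smooth function f : ℝ² → ℝ (of variables (y,u)) there exists a smooth function G : ℝ² → ℝ (of variables (y,u)) such that, identically in (x, y, u) ∈ ℝ³: (i) A_{yy}(x,y) = 0; (ii) B_{yy}(x,y) − 2·A_{xy}(x,y) = 0; (iii) 2·B_{xy}(x,y) − A_{xx}(x,y) − 3·f(y,u)·A_y(x,y) = 0; (iv) B_{xx}(x,y) − C(u)·f_u(y,u) − B(x,y)·f_y(y,u) − G(y,u) + f(y,u)·B_y(x,y) − 2·f(y,u)·A_x(x,y) = 0. Then there exist real constants α, β, γ, δ such that A(x,y) = α·x + β and B(x,y) = γ + δ·y for all (x,y). -/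
/-- Partial derivative in the first variable. -/
noncomputable def pd1 (f : ℝ → ℝ → ℝ) : ℝ → ℝ → ℝ := fun y u => deriv (fun s => f s u) y

/-- Partial derivative in the second variable. -/
noncomputable def pd2 (f : ℝ → ℝ → ℝ) : ℝ → ℝ → ℝ := fun y u => deriv (f y) u

/-!
It suffices to test the hypothesis on `f = u` and `f = y`. For `f = u`, condition (iii) at
`u = 0` and `u = 1` gives `A_y = 0`, so `A = a(x)` and then (ii) gives `B_yy = 0`; condition (iv)
at `u = 0` and `u = 1` shows that `B_xx` and `B_y - 2 A_x` depend on `y` alone. For `f = y`,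
condition (iv) then expresses `B` through functions of `y` alone, so `B = b(y)`, and (iii)
becomes `a'' = 0`. Hence `a'' = b'' = 0` and both are affine.
-/

theorem eq_add_smul_of_deriv_deriv_eq_zero {𝕜 F : Type*} [RCLike 𝕜] [NormedAddCommGroup F]
    [NormedSpace 𝕜 F] {a : 𝕜 → F} (ha : Differentiable 𝕜 a) (ha' : Differentiable 𝕜 (deriv a))
    (h : ∀ x, deriv (deriv a) x = 0) (x : 𝕜) : a x = a 0 + x • deriv a 0 := by
  have hderiv : ∀ x, deriv a x = deriv a 0 := fun x => is_const_of_deriv_eq_zero ha' h x 0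
  have hdiff : Differentiable 𝕜 fun x => a x - x • deriv a 0 :=
    ha.sub (differentiable_id.smul_const _)
  have hconst := is_const_of_deriv_eq_zero hdiff (fun x => by
    have : HasDerivAt (fun x => a x - x • deriv a 0) (deriv a x - (1 : 𝕜) • deriv a 0) x :=
      (ha x).hasDerivAt.sub ((hasDerivAt_id x).smul_const _)
    rw [this.deriv, one_smul, hderiv, sub_self]) x 0
  simpa [sub_eq_iff_eq_add, add_comm] using hconst

theorem ContDiff.eq_add_mul_of_deriv_deriv_eq_zero {a : ℝ → ℝ} (ha : ContDiff ℝ 2 a)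
    (h : ∀ x, deriv (deriv a) x = 0) : ∃ α β : ℝ, ∀ x, a x = α * x + β := by
  obtain ⟨ha₁, -, ha₂⟩ := (contDiff_succ_iff_deriv (n := 1)).mp ha
  exact ⟨deriv a 0, a 0, fun x => by
    rw [eq_add_smul_of_deriv_deriv_eq_zero ha₁ (ha₂.differentiable one_ne_zero) h x, smul_eq_mul,
      add_comm, mul_comm]⟩

section Partial

variable {f : ℝ → ℝ → ℝ} {n : WithTop ℕ∞}

theorem ContDiff.uncurry_apply_left (hf : ContDiff ℝ n fun p : ℝ × ℝ => f p.1 p.2) (x : ℝ) :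
    ContDiff ℝ n (f x) :=
  hf.comp (contDiff_const.prodMk contDiff_id)

theorem ContDiff.uncurry_apply_right (hf : ContDiff ℝ n fun p : ℝ × ℝ => f p.1 p.2) (y : ℝ) :
    ContDiff ℝ n fun x => f x y :=
  hf.comp (contDiff_id.prodMk contDiff_const)

theorem exists_eq_fun_fst_of_pd2_eq_zero (hf : ∀ x, Differentiable ℝ (f x))
    (h : ∀ x y, pd2 f x y = 0) : ∃ g : ℝ → ℝ, f = fun x _ => g x :=
  ⟨fun x => f x 0, funext₂ fun x y => is_const_of_deriv_eq_zero (hf x) (h x) y 0⟩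

variable (g : ℝ → ℝ)

@[simp] theorem pd1_fun_fst : pd1 (fun x _ => g x) = fun x _ => deriv g x := rfl

@[simp] theorem pd2_fun_fst : pd2 (fun x _ => g x) = fun _ _ => 0 :=
  funext₂ fun _ _ => deriv_const _ _

@[simp] theorem pd1_fun_snd : pd1 (fun _ y => g y) = fun _ _ => 0 :=
  funext₂ fun _ _ => deriv_const _ _

@[simp] theorem pd2_fun_snd : pd2 (fun _ y => g y) = fun _ y => deriv g y := rfl

end Partial

theorem feedback_preserving_fields_are_affine_general
    (A B : ℝ → ℝ → ℝ) (C : ℝ → ℝ)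
    (hA : ContDiff ℝ (⊤ : ℕ∞) fun p : ℝ × ℝ => A p.1 p.2)
    (hB : ContDiff ℝ (⊤ : ℕ∞) fun p : ℝ × ℝ => B p.1 p.2)
    (h : ∀ f : ℝ → ℝ → ℝ, (ContDiff ℝ (⊤ : ℕ∞) fun p : ℝ × ℝ => f p.1 p.2) →
      ∃ G : ℝ → ℝ → ℝ, (ContDiff ℝ (⊤ : ℕ∞) fun p : ℝ × ℝ => G p.1 p.2) ∧
        ∀ x y u : ℝ,
          pd2 (pd2 A) x y = 0 ∧
          pd2 (pd2 B) x y - 2 * pd2 (pd1 A) x y = 0 ∧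
          2 * pd2 (pd1 B) x y - pd1 (pd1 A) x y - 3 * f y u * pd2 A x y = 0 ∧
          pd1 (pd1 B) x y - C u * pd2 f y u - B x y * pd1 f y u - G y u
            + f y u * pd2 B x y - 2 * f y u * pd1 A x y = 0) :
    ∃ α β γ δ : ℝ, ∀ x y : ℝ, A x y = α * x + β ∧ B x y = γ + δ * y := by
  obtain ⟨G₁, -, H₁⟩ := h (fun _ u => u) contDiff_snd
  obtain ⟨G₂, -, H₂⟩ := h (fun y _ => y) contDiff_fst
  simp only [pd1_fun_fst, pd2_fun_fst, pd1_fun_snd, pd2_fun_snd, deriv_id''] at H₁ H₂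
  obtain ⟨a, rfl⟩ := exists_eq_fun_fst_of_pd2_eq_zero
    (fun x => (hA.uncurry_apply_left x).differentiable (by simp))
    (fun x y => by linarith [(H₁ x y 0).2.2.1, (H₁ x y 1).2.2.1])
  simp only [pd1_fun_fst, pd2_fun_fst] at H₁ H₂
  obtain ⟨b, rfl⟩ : ∃ b : ℝ → ℝ, B = fun _ y => b y := ⟨fun y => B 0 y, funext₂ fun x y => by
    linear_combination (1 - y) * ((H₁ x y 0).2.2.2 - (H₁ 0 y 0).2.2.2)
      + y * ((H₁ x y 1).2.2.2 - (H₁ 0 y 1).2.2.2) - ((H₂ x y 0).2.2.2 - (H₂ 0 y 0).2.2.2)⟩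
  simp only [pd1_fun_snd, pd2_fun_snd, deriv_const'] at H₁
  have ha : ContDiff ℝ 2 a :=
    (hA.uncurry_apply_right (f := fun x _ => a x) 0).of_le (WithTop.coe_le_coe.mpr le_top)
  have hb : ContDiff ℝ 2 b :=
    (hB.uncurry_apply_left (f := fun _ y => b y) 0).of_le (WithTop.coe_le_coe.mpr le_top)
  obtain ⟨α, β, ha_eq⟩ := ha.eq_add_mul_of_deriv_deriv_eq_zero fun x => by
    linarith [(H₁ x 0 0).2.2.1]
  obtain ⟨δ, γ, hb_eq⟩ := hb.eq_add_mul_of_deriv_deriv_eq_zero fun y => by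
    linarith [(H₁ 0 y 0).2.1]
  exact ⟨α, β, γ, δ, fun x y => ⟨ha_eq x, (hb_eq y).trans (add_comm _ _)⟩⟩

/-- If smooth `A(x,y)`, `B(x,y)` and `C(u)` are such that for every smooth `f(y,u)` there is a
smooth `G(y,u)` with
`A_yy = 0`, `B_yy − 2A_xy = 0`, `2B_xy − A_xx − 3fA_y = 0`, and
`B_xx − C f_u − B f_y − G + f B_y − 2 f A_x = 0` identically in `(x,y,u)`,
then `A(x,y) = αx + β` and `B(x,y) = γ + δy` for some constants `α, β, γ, δ`. -/
theorem feedback_preserving_fields_are_affine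
    (A B : ℝ → ℝ → ℝ) (C : ℝ → ℝ)
    (hA : ContDiff ℝ (⊤ : ℕ∞) fun p : ℝ × ℝ => A p.1 p.2)
    (hB : ContDiff ℝ (⊤ : ℕ∞) fun p : ℝ × ℝ => B p.1 p.2)
    (hC : ContDiff ℝ (⊤ : ℕ∞) C)
    (h : ∀ f : ℝ → ℝ → ℝ, (ContDiff ℝ (⊤ : ℕ∞) fun p : ℝ × ℝ => f p.1 p.2) →
      ∃ G : ℝ → ℝ → ℝ, (ContDiff ℝ (⊤ : ℕ∞) fun p : ℝ × ℝ => G p.1 p.2) ∧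
        ∀ x y u : ℝ,
          pd2 (pd2 A) x y = 0 ∧
          pd2 (pd2 B) x y - 2 * pd2 (pd1 A) x y = 0 ∧
          2 * pd2 (pd1 B) x y - pd1 (pd1 A) x y - 3 * f y u * pd2 A x y = 0 ∧
          pd1 (pd1 B) x y - C u * pd2 f y u - B x y * pd1 f y u - G y u
            + f y u * pd2 B x y - 2 * f y u * pd1 A x y = 0) :
    ∃ α β γ δ : ℝ, ∀ x y : ℝ, A x y = α * x + β ∧ B x y = γ + δ * y :=
  feedback_preserving_fields_are_affine_general A B C hA hB h
end

section
/- Let f : V → ℝ be smooth on an open set V ⊆ ℝ², let a ≠ 0, b, λ ≠ 0 be real constants, and let U : ℝ → ℝ be smooth with U'(u) ≠ 0 for all u. Define T(y,u) = (a·y + b, U(u)) and f̃(y,u) = λ·f(T(y,u)) on T⁻¹(V). Then at every point (y,u) with f_y(T(y,u)) ≠ 0 and f_u(T(y,u)) ≠ 0 one has J32(f̃)(y,u) = J32(f)(T(y,u)), i.e. f̃²·f̃_{yyu}/(f̃_y²·f̃_u) = (f²·f_{yyu}/(f_y²·f_u)) ∘ T. -/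
/-- Second-order differential invariant `J21 = f·f_yy / f_y²`. -/
noncomputable def J21 (f : ℝ → ℝ → ℝ) : ℝ → ℝ → ℝ := fun y u =>
  f y u * pd1 (pd1 f) y u / (pd1 f y u) ^ 2

/-- Second-order differential invariant `J22 = f·f_yu / (f_y·f_u)`. -/
noncomputable def J22 (f : ℝ → ℝ → ℝ) : ℝ → ℝ → ℝ := fun y u =>
  f y u * pd2 (pd1 f) y u / (pd1 f y u * pd2 f y u)

/-- Third-order differential invariant `J31 = f²·f_yyy / f_y³`. -/
noncomputable def J31 (f : ℝ → ℝ → ℝ) : ℝ → ℝ → ℝ := fun y u =>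
  f y u ^ 2 * pd1 (pd1 (pd1 f)) y u / (pd1 f y u) ^ 3

/-- Third-order differential invariant `J32 = f²·f_yyu / (f_y²·f_u)`. -/
noncomputable def J32 (f : ℝ → ℝ → ℝ) : ℝ → ℝ → ℝ := fun y u =>
  f y u ^ 2 * pd2 (pd1 (pd1 f)) y u / ((pd1 f y u) ^ 2 * pd2 f y u)

/-- Third-order differential invariant `J33 = f²·f_yuu/(f_u²·f_y) − J22·f·f_uu/f_u²`. -/
noncomputable def J33 (f : ℝ → ℝ → ℝ) : ℝ → ℝ → ℝ := fun y u =>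
  f y u ^ 2 * pd2 (pd2 (pd1 f)) y u / ((pd2 f y u) ^ 2 * pd1 f y u)
    - J22 f y u * (f y u * pd2 (pd2 f) y u / (pd2 f y u) ^ 2)

/-- Fourth-order differential invariant `J41 = f³·f_yyyy / f_y⁴`. -/
noncomputable def J41 (f : ℝ → ℝ → ℝ) : ℝ → ℝ → ℝ := fun y u =>
  f y u ^ 3 * pd1 (pd1 (pd1 (pd1 f))) y u / (pd1 f y u) ^ 4

/-- Fourth-order differential invariant
`J44 = f³·f_yuuu/(f_y·f_u³) − 3·J33·f·f_uu/f_u² − J22·f²·f_uuu/f_u³`. -/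
noncomputable def J44 (f : ℝ → ℝ → ℝ) : ℝ → ℝ → ℝ := fun y u =>
  f y u ^ 3 * pd2 (pd2 (pd2 (pd1 f))) y u / (pd1 f y u * (pd2 f y u) ^ 3)
    - 3 * J33 f y u * (f y u * pd2 (pd2 f) y u / (pd2 f y u) ^ 2)
    - J22 f y u * (f y u ^ 2 * pd2 (pd2 (pd2 f)) y u / (pd2 f y u) ^ 3)

/-- The invariant derivation `∇₁ = (f/f_y)·∂/∂y` applied to `g`. -/
noncomputable def nab1 (f g : ℝ → ℝ → ℝ) : ℝ → ℝ → ℝ := fun y u =>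
  f y u / pd1 f y u * pd1 g y u

/-- The invariant derivation `∇₂ = (f/f_u)·∂/∂u` applied to `g`. -/
noncomputable def nab2 (f g : ℝ → ℝ → ℝ) : ℝ → ℝ → ℝ := fun y u =>
  f y u / pd2 f y u * pd2 g y u

/-
The affine change `y ↦ a y + b` and the factor `λ` commute with `∂_y` exactly, each `∂_y` picking
up a factor `a`; with Mathlib's `deriv` this holds for every `f`, differentiable or not. The chain
rule in `u` contributes a factor `U'(u)` to each `∂_u`. So `f̃`, `f̃_y`, `f̃_u`, `f̃_yyu` are `λ`,
`λa`, `λU'`, `λa²U'` times the corresponding derivatives of `f` at `T(y,u)`, and the weights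
`λ³a²U'` cancel in `J32`.
-/

noncomputable def feedback (a b c : ℝ) (U : ℝ → ℝ) (f : ℝ → ℝ → ℝ) : ℝ → ℝ → ℝ :=
  fun s v => c * f (a * s + b) (U v)

lemma deriv_comp_mul_add (h : ℝ → ℝ) (a b s : ℝ) :
    deriv (fun t => h (a * t + b)) s = a * deriv h (a * s + b) := by
  rw [deriv_comp_mul_left a (fun x => h (x + b)) s, deriv_comp_add_const, smul_eq_mul]

lemma pd1_feedback (a b c : ℝ) (U : ℝ → ℝ) (f : ℝ → ℝ → ℝ) :
    pd1 (feedback a b c U f) = feedback a b (c * a) U (pd1 f) := by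
  funext s v
  simp only [pd1, feedback, deriv_const_mul_field', deriv_comp_mul_add (fun x => f x (U v)),
    mul_assoc]

lemma pd2_feedback {a b c : ℝ} {U : ℝ → ℝ} {f : ℝ → ℝ → ℝ} {s v : ℝ}
    (hf : DifferentiableAt ℝ (f (a * s + b)) (U v)) (hU : DifferentiableAt ℝ U v) :
    pd2 (feedback a b c U f) s v = c * pd2 f (a * s + b) (U v) * deriv U v := by
  rw [mul_assoc]
  exact ((hf.hasDerivAt.comp v hU.hasDerivAt).const_mul c).deriv

lemma ContDiffOn.pd1 {V : Set (ℝ × ℝ)} {f : ℝ → ℝ → ℝ} {n : WithTop ℕ∞}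
    (hV : IsOpen V) (hf : ContDiffOn ℝ (n + 1) (fun p : ℝ × ℝ => f p.1 p.2) V) :
    ContDiffOn ℝ n (fun p : ℝ × ℝ => pd1 f p.1 p.2) V := by
  -- on `V`, `∂_y f` is the directional derivative `p ↦ Df(p)(1,0)`
  refine ((hf.fderiv_of_isOpen hV le_rfl).clm_apply
    (contDiffOn_const (c := ((1 : ℝ), (0 : ℝ))))).congr fun p hp => ?_
  have hline : HasDerivAt (fun s : ℝ => (s, p.2)) ((1 : ℝ), (0 : ℝ)) p.1 :=
    (hasDerivAt_id p.1).prodMk (hasDerivAt_const p.1 p.2)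
  have hd := (hf.contDiffAt (hV.mem_nhds hp)).differentiableAt (by simp)
  exact (hd.hasFDerivAt.comp_hasDerivAt p.1 hline).deriv

lemma ContDiffOn.differentiableAt_right {V : Set (ℝ × ℝ)} {f : ℝ → ℝ → ℝ} {n : WithTop ℕ∞}
    (hV : IsOpen V) (hf : ContDiffOn ℝ n (fun p : ℝ × ℝ => f p.1 p.2) V) (hn : n ≠ 0)
    {x v : ℝ} (hxv : (x, v) ∈ V) : DifferentiableAt ℝ (f x) v :=
  ((hf.contDiffAt (hV.mem_nhds hxv)).differentiableAt hn).comp (f := fun w : ℝ => (x, w)) v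
    (by fun_prop)

theorem J32_invariant_general (V : Set (ℝ × ℝ)) (hV : IsOpen V) (f : ℝ → ℝ → ℝ)
    (hf : ContDiffOn ℝ (⊤ : ℕ∞) (fun p : ℝ × ℝ => f p.1 p.2) V)
    (a b l : ℝ) (ha : a ≠ 0) (hl : l ≠ 0)
    (U : ℝ → ℝ) (hU : ContDiff ℝ (⊤ : ℕ∞) U) (hU' : ∀ v : ℝ, deriv U v ≠ 0)
    (y u : ℝ) (hmem : (a * y + b, U u) ∈ V) :
    J32 (fun s v => l * f (a * s + b) (U v)) y u = J32 f (a * y + b) (U u) := by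
  have hf2 : ContDiffOn ℝ 1 (fun p : ℝ × ℝ => pd1 (pd1 f) p.1 p.2) V :=
    .pd1 hV <| .pd1 hV <| hf.of_le (m := 1 + 1 + 1) (WithTop.coe_le_coe.mpr le_top)
  have hUu : DifferentiableAt ℝ U u := hU.differentiable (by simp) u
  change J32 (feedback a b l U f) y u = _
  rw [J32, J32, pd1_feedback, pd1_feedback,
    pd2_feedback (hf.differentiableAt_right hV (by simp) hmem) hUu,
    pd2_feedback (hf2.differentiableAt_right hV one_ne_zero hmem) hUu]
  simp only [feedback]
  have hk : l ^ 3 * a ^ 2 * deriv U u ≠ 0 :=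
    mul_ne_zero (mul_ne_zero (pow_ne_zero 3 hl) (pow_ne_zero 2 ha)) (hU' u)
  conv_rhs => rw [← mul_div_mul_left _ _ hk]
  ring

/-- Invariance of `J32` under the feedback substitution `T(y,u) = (a·y + b, U(u))`,
`f̃ = λ·(f ∘ T)`, where `U' ≠ 0` everywhere: at every point with
`f_y(T(y,u)) ≠ 0` and `f_u(T(y,u)) ≠ 0`, `J32(f̃)(y,u) = J32(f)(T(y,u))`. -/
theorem J32_invariant (V : Set (ℝ × ℝ)) (hV : IsOpen V) (f : ℝ → ℝ → ℝ)
    (hf : ContDiffOn ℝ (⊤ : ℕ∞) (fun p : ℝ × ℝ => f p.1 p.2) V)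
    (a b l : ℝ) (ha : a ≠ 0) (hl : l ≠ 0)
    (U : ℝ → ℝ) (hU : ContDiff ℝ (⊤ : ℕ∞) U) (hU' : ∀ v : ℝ, deriv U v ≠ 0)
    (y u : ℝ) (hmem : (a * y + b, U u) ∈ V)
    (hfy : pd1 f (a * y + b) (U u) ≠ 0) (hfu : pd2 f (a * y + b) (U u) ≠ 0) :
    J32 (fun s v => l * f (a * s + b) (U v)) y u = J32 f (a * y + b) (U u) :=
  J32_invariant_general V hV f hf a b l ha hl U hU hU' y u hmem
end

section
/- Let I, J ⊆ ℝ be open intervals and let f : I × J → ℝ be smooth with f(y,u) ≠ 0 and f_y(y,u) ≠ 0 for all (y,u) ∈ I × J.687 Then J31(f) = f²·f_{yyy}/f_y³ vanishes identically on I × J if and only if there exist smooth functions α, β, γ : J → ℝ such that f(y,u) = α(u)·y² + β(u)·y + γ(u) for all (y,u) ∈ I × J. (Equivalently, the equation y'' + f(y,u) = 0 is locally equivalent to y'' + α(u)·y² + β(u)·y + γ(u) = 0 with respect to feedback transformations if and only if J31(f) = 0.) -/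
/-!
Because `f` and `f_y` do not vanish, `J31(f) = 0` says exactly that `f_yyy = 0`. On the interval
`I` a function with vanishing third derivative is a polynomial of degree less than three
(integrate three times), so every slice `f(·, u)` is quadratic. Its coefficients are recovered by
Lagrange interpolation at three chosen points `yᵢ ∈ I`, hence are fixed linear combinations of the
smooth functions `f(yᵢ, ·)`.
-/

open Polynomial Set

namespace Polynomial

variable {K : Type*} [Field K] [CharZero K]

theorem exists_derivative_eq_of_degree_lt {q : K[X]} {n : ℕ} (hq : q.degree < n) :
    ∃ p : K[X], p.degree < ↑(n + 1) ∧ derivative p = q := by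
  refine ⟨∑ i ∈ Finset.range n, C (q.coeff i / (i + 1)) * X ^ (i + 1), ?_, ?_⟩
  · rw [degree_lt_iff_coeff_zero]
    intro m hm
    simp only [finsetSum_coeff, coeff_C_mul_X_pow]
    refine Finset.sum_eq_zero fun i hi => ?_
    simp only [Finset.mem_range] at hi
    rw [if_neg (by omega)]
  · ext m
    rw [coeff_derivative, finsetSum_coeff]
    simp only [coeff_C_mul_X_pow, add_left_inj, Finset.sum_ite_eq, Finset.mem_range]
    split_ifs with hm
    · field_simp
    · rw [coeff_eq_zero_of_degree_lt (hq.trans_le (by exact_mod_cast not_lt.mp hm)), zero_mul]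

theorem eval_eq_sum_range_of_degree_lt {R : Type*} [CommSemiring R] {p : R[X]} {n : ℕ}
    (hp : p.degree < n) (x : R) : p.eval x = ∑ i ∈ Finset.range n, p.coeff i * x ^ i := by
  rcases eq_or_ne p 0 with rfl | hp0
  · simp
  exact eval_eq_sum_range' ((natDegree_lt_iff_degree_lt hp0).2 hp) x

end Polynomial

section Uncurry

variable {𝕜 E F G : Type*} [NontriviallyNormedField 𝕜] [NormedAddCommGroup E] [NormedSpace 𝕜 E]
  [NormedAddCommGroup F] [NormedSpace 𝕜 F] [NormedAddCommGroup G] [NormedSpace 𝕜 G]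
  {f : E → F → G} {s : Set E} {t : Set F} {n : WithTop ℕ∞}

theorem ContDiffOn.of_uncurry_left (hf : ContDiffOn 𝕜 n (fun p : E × F => f p.1 p.2) (s ×ˢ t))
    {x : E} (hx : x ∈ s) : ContDiffOn 𝕜 n (f x) t :=
  hf.comp (contDiffOn_const.prodMk contDiffOn_id) fun _ hy => ⟨hx, hy⟩

theorem ContDiffOn.of_uncurry_right (hf : ContDiffOn 𝕜 n (fun p : E × F => f p.1 p.2) (s ×ˢ t))
    {y : F} (hy : y ∈ t) : ContDiffOn 𝕜 n (fun x => f x y) s :=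
  hf.comp (contDiffOn_id.prodMk contDiffOn_const) fun _ hx => ⟨hx, hy⟩

end Uncurry

section RCLike

variable {𝕜 : Type*} [RCLike 𝕜]

theorem iterate_deriv_polynomial_eval (p : 𝕜[X]) (n : ℕ) :
    deriv^[n] (fun x => p.eval x) = fun x => (derivative^[n] p).eval x := by
  induction n generalizing p with
  | zero => rfl
  | succ n ih =>
    have hderiv : deriv (fun x => p.eval x) = fun x => p.derivative.eval x :=
      funext fun x => p.deriv
    rw [Function.iterate_succ_apply, Function.iterate_succ_apply, hderiv, ih]

namespace IsOpen

variable {s : Set 𝕜}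

theorem exists_polynomial_eqOn_of_iterate_deriv_eq_zero (hs : IsOpen s)
    (hs' : IsPreconnected s) {n : ℕ} {g : 𝕜 → 𝕜} (hg : ContDiffOn 𝕜 n g s)
    (hgn : ∀ x ∈ s, deriv^[n] g x = 0) :
    ∃ p : 𝕜[X], p.degree < n ∧ s.EqOn g fun x => p.eval x := by
  induction n generalizing g with
  | zero => exact ⟨0, by simp, fun x hx => by simpa using hgn x hx⟩
  | succ n ih =>
    rw [Nat.cast_succ] at hg
    obtain ⟨hg₁, -, hg'⟩ := (contDiffOn_succ_iff_deriv_of_isOpen hs).1 hg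
    obtain ⟨q, hqn, hq⟩ := ih hg' hgn
    obtain ⟨p, hpn, rfl⟩ := exists_derivative_eq_of_degree_lt hqn
    obtain ⟨c, hc⟩ := hs.exists_eq_add_of_deriv_eq hs' hg₁ p.differentiable.differentiableOn
      fun x hx => (hq hx).trans p.deriv.symm
    refine ⟨p + C c, (degree_add_le _ _).trans_lt (max_lt hpn ?_), fun x hx => by simp [hc hx]⟩
    exact degree_C_le.trans_lt (by exact_mod_cast Nat.succ_pos n)

theorem iterate_deriv_eq_zero_of_eqOn_polynomial (hs : IsOpen s) {n : ℕ} {g : 𝕜 → 𝕜}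
    {p : 𝕜[X]} (hpn : p.degree < n) (hg : s.EqOn g fun x => p.eval x) {x : 𝕜} (hx : x ∈ s) :
    deriv^[n] g x = 0 := by
  have hgp : g =ᶠ[nhds x] fun x => p.eval x := Filter.eventually_of_mem (hs.mem_nhds hx) hg
  rw [← iteratedDeriv_eq_iterate, (hgp.iteratedDeriv n).eq_of_nhds, iteratedDeriv_eq_iterate,
    iterate_deriv_polynomial_eval p, iterate_derivative_eq_zero_of_degree_lt hpn]
  exact eval_zero

end IsOpen

theorem Lagrange.contDiffOn_coeff_interpolate {ι : Type*} [DecidableEq ι] {s : Finset ι}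
    {v : ι → 𝕜} {r : ι → 𝕜 → 𝕜} {t : Set 𝕜} {n : WithTop ℕ∞}
    (hr : ∀ i ∈ s, ContDiffOn 𝕜 n (r i) t) (k : ℕ) :
    ContDiffOn 𝕜 n (fun u => (interpolate s v fun i => r i u).coeff k) t := by
  simp only [interpolate_apply, finsetSum_coeff, coeff_C_mul]
  exact ContDiffOn.sum fun i hi => (hr i hi).mul contDiffOn_const

theorem IsOpen.exists_contDiffOn_coeff_of_iterate_deriv_eq_zero {s t : Set 𝕜} (hs : IsOpen s)
    (hs' : IsPreconnected s) {f : 𝕜 → 𝕜 → 𝕜} {n : ℕ} {m : WithTop ℕ∞} (hnm : n ≤ m)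
    (hf : ContDiffOn 𝕜 m (fun p : 𝕜 × 𝕜 => f p.1 p.2) (s ×ˢ t))
    (hfn : ∀ y ∈ s, ∀ u ∈ t, deriv^[n] (fun y => f y u) y = 0) :
    ∃ a : ℕ → 𝕜 → 𝕜, (∀ k, ContDiffOn 𝕜 m (a k) t) ∧
      ∀ y ∈ s, ∀ u ∈ t, f y u = ∑ k ∈ Finset.range n, a k u * y ^ k := by
  obtain rfl | ⟨y₀, hy₀⟩ := s.eq_empty_or_nonempty
  · exact ⟨0, fun _ => contDiffOn_const, by simp⟩
  obtain ⟨nodes, hnodes, hcard⟩ :=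
    (infinite_of_mem_nhds y₀ (hs.mem_nhds hy₀)).exists_subset_card_eq n
  set P : 𝕜 → 𝕜[X] := fun u => Lagrange.interpolate nodes id fun y => f y u
  have hdegP (u : 𝕜) : (P u).degree < n :=
    hcard ▸ Lagrange.degree_interpolate_lt _ (injOn_id _)
  have hfP : ∀ u ∈ t, s.EqOn (fun y => f y u) fun y => (P u).eval y := by
    intro u hu
    obtain ⟨q, hqn, hq⟩ := hs.exists_polynomial_eqOn_of_iterate_deriv_eq_zero hs'
      ((hf.of_uncurry_right hu).of_le hnm) fun y hy => hfn y hy u hu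
    have hqP : q = P u := Lagrange.eq_interpolate_of_eval_eq _ (injOn_id _) (hcard ▸ hqn)
      fun y hy => (hq (hnodes hy)).symm
    rwa [← hqP]
  refine ⟨fun k u => (P u).coeff k, fun k => ?_, fun y hy u hu => ?_⟩
  · exact Lagrange.contDiffOn_coeff_interpolate
      (fun y hy => hf.of_uncurry_left (hnodes hy)) k
  · exact (hfP u hu hy).trans (eval_eq_sum_range_of_degree_lt (hdegP u) y)

end RCLike

theorem J31_eq_zero_iff {f : ℝ → ℝ → ℝ} {y u : ℝ} (hf0 : f y u ≠ 0) (hfy : pd1 f y u ≠ 0) :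
    J31 f y u = 0 ↔ deriv^[3] (fun s => f s u) y = 0 := by
  have hfyyy : pd1 (pd1 (pd1 f)) y u = deriv^[3] (fun s => f s u) y := rfl
  simp [J31, hf0, hfy, hfyyy]

theorem J31_eq_zero_iff_quadratic_general (I J : Set ℝ)
    (hIo : IsOpen I) (hIc : Convex ℝ I)
    (f : ℝ → ℝ → ℝ)
    (hf : ContDiffOn ℝ (⊤ : ℕ∞) (fun p : ℝ × ℝ => f p.1 p.2) (I ×ˢ J))
    (hf0 : ∀ y ∈ I, ∀ u ∈ J, f y u ≠ 0)
    (hfy : ∀ y ∈ I, ∀ u ∈ J, pd1 f y u ≠ 0) :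
    (∀ y ∈ I, ∀ u ∈ J, J31 f y u = 0) ↔
      ∃ α β γ : ℝ → ℝ, ContDiffOn ℝ (⊤ : ℕ∞) α J ∧ ContDiffOn ℝ (⊤ : ℕ∞) β J ∧
        ContDiffOn ℝ (⊤ : ℕ∞) γ J ∧
        ∀ y ∈ I, ∀ u ∈ J, f y u = α u * y ^ 2 + β u * y + γ u := by
  constructor
  · intro hJ31
    obtain ⟨a, ha, hfa⟩ := hIo.exists_contDiffOn_coeff_of_iterate_deriv_eq_zero
      hIc.isPreconnected (n := 3) (WithTop.coe_le_coe.2 le_top) hf fun y hy u hu =>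
        (J31_eq_zero_iff (hf0 y hy u hu) (hfy y hy u hu)).1 (hJ31 y hy u hu)
    refine ⟨a 2, a 1, a 0, ha 2, ha 1, ha 0, fun y hy u hu => ?_⟩
    rw [hfa y hy u hu]
    simp only [Finset.sum_range_succ, Finset.sum_range_zero]
    ring
  · rintro ⟨α, β, γ, -, -, -, hquad⟩ y hy u hu
    rw [J31_eq_zero_iff (hf0 y hy u hu) (hfy y hy u hu)]
    refine hIo.iterate_deriv_eq_zero_of_eqOn_polynomial
      (p := C (α u) * X ^ 2 + C (β u) * X + C (γ u)) ?_ (fun s hs => ?_) hy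
    · exact degree_quadratic_le.trans_lt (by norm_num)
    · simp [hquad s hs u hu]

/-- On a product of open intervals where `f` and `f_y` are nowhere zero, the invariant
`J31(f) = f²·f_yyy/f_y³` vanishes identically if and only if
`f(y,u) = α(u)·y² + β(u)·y + γ(u)` for some smooth functions `α, β, γ` of `u`. -/
theorem J31_eq_zero_iff_quadratic (I J : Set ℝ)
    (hIo : IsOpen I) (hIc : Convex ℝ I) (hJo : IsOpen J) (hJc : Convex ℝ J)
    (f : ℝ → ℝ → ℝ)
    (hf : ContDiffOn ℝ (⊤ : ℕ∞) (fun p : ℝ × ℝ => f p.1 p.2) (I ×ˢ J))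
    (hf0 : ∀ y ∈ I, ∀ u ∈ J, f y u ≠ 0)
    (hfy : ∀ y ∈ I, ∀ u ∈ J, pd1 f y u ≠ 0) :
    (∀ y ∈ I, ∀ u ∈ J, J31 f y u = 0) ↔
      ∃ α β γ : ℝ → ℝ, ContDiffOn ℝ (⊤ : ℕ∞) α J ∧ ContDiffOn ℝ (⊤ : ℕ∞) β J ∧
        ContDiffOn ℝ (⊤ : ℕ∞) γ J ∧
        ∀ y ∈ I, ∀ u ∈ J, f y u = α u * y ^ 2 + β u * y + γ u :=
  J31_eq_zero_iff_quadratic_general I J hIo hIc f hf hf0 hfy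
end

section
/- Let n ≥ 1 be a natural number, let I, J ⊆ ℝ be open intervals, and let f : I × J → ℝ be smooth with f(y,u) > 0, f_y(y,u) ≠ 0 and f_u(y,u) ≠ 0 for all (y,u) ∈ I × J. Then the five conditions J21(f) = (n−1)/n, J22(f) = 1, J31(f) = (n² − 3n + 2)/n², J32(f) = (n−1)/n and J33(f) = 0 hold identically on I × J if and only if there exist a smooth nowhere-zero function α : J → ℝ and a real constant c such that f(y,u) = (α(u)·(y − c))ⁿ for all (y,u) ∈ I × J. (Equivalently, the equation y'' + f(y,u) = 0 is locally equivalent to y'' + (α(u)·y)ⁿ = 0 with respect to feedback transformations.) -/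
/-!
Since `J22 = 1` says `f f_yu = f_y f_u`, i.e. `(log f)_yu = 0`, the function separates as
`f(y,u) = φ(u) ψ(y)`. In `y`, `J21 = (n - 1)/n` is the ODE `g g'' = (1 - 1/n) g'²`, which says
exactly that `(g^{1/n})'' = 0`; hence `ψ = (a (y - c))ⁿ`, and `α = a φ^{1/n}`.

Conversely, for a separated `f = φ(u) ψ(y)` one has `J22 = 1` and `J33 = 0`, while
`J21 = J32` and `J31` depend on `ψ` alone; for `ψ = (y - c)ⁿ` their values follow from
`(y - c)ᵏ ψ⁽ᵏ⁾ = n (n - 1) ⋯ (n - k + 1) ψ`.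
-/

open Set Filter Topology

theorem IsOpen.eq_of_hasDerivAt_zero {s : Set ℝ} (hs : IsOpen s) (hs' : IsPreconnected s)
    {g : ℝ → ℝ} (hg : ∀ x ∈ s, HasDerivAt g 0 x) {x y : ℝ} (hx : x ∈ s) (hy : y ∈ s) :
    g x = g y :=
  hs.is_const_of_deriv_eq_zero hs' (fun z hz => (hg z hz).differentiableAt.differentiableWithinAt)
    (fun z hz => (hg z hz).deriv) hx hy

section Partials

variable {I J : Set ℝ} {f g : ℝ → ℝ → ℝ} {n : WithTop ℕ∞} {y u : ℝ}

theorem ContDiffOn.slice_fst (hf : ContDiffOn ℝ n (fun p : ℝ × ℝ => f p.1 p.2) (I ×ˢ J))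
    (hu : u ∈ J) : ContDiffOn ℝ n (fun y => f y u) I :=
  hf.comp (contDiffOn_id.prodMk contDiffOn_const) fun _ hy => ⟨hy, hu⟩

theorem ContDiffOn.slice_snd (hf : ContDiffOn ℝ n (fun p : ℝ × ℝ => f p.1 p.2) (I ×ˢ J))
    (hy : y ∈ I) : ContDiffOn ℝ n (f y) J :=
  hf.comp (contDiffOn_const.prodMk contDiffOn_id) fun _ hu => ⟨hy, hu⟩

theorem hasDerivAt_pd1 (hf : ContDiffOn ℝ 1 (fun p : ℝ × ℝ => f p.1 p.2) (I ×ˢ J))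
    (hI : IsOpen I) (hy : y ∈ I) (hu : u ∈ J) : HasDerivAt (fun s => f s u) (pd1 f y u) y :=
  (((hf.slice_fst hu).differentiableOn one_ne_zero).differentiableAt
    (hI.mem_nhds hy)).hasDerivAt

theorem hasDerivAt_pd2 (hf : ContDiffOn ℝ 1 (fun p : ℝ × ℝ => f p.1 p.2) (I ×ˢ J))
    (hJ : IsOpen J) (hy : y ∈ I) (hu : u ∈ J) : HasDerivAt (f y) (pd2 f y u) u :=
  (((hf.slice_snd hy).differentiableOn one_ne_zero).differentiableAt
    (hJ.mem_nhds hu)).hasDerivAt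

theorem contDiffOn_pd1 (hI : IsOpen I) (hJ : IsOpen J)
    (hf : ContDiffOn ℝ (n + 1) (fun p : ℝ × ℝ => f p.1 p.2) (I ×ˢ J)) :
    ContDiffOn ℝ n (fun p : ℝ × ℝ => pd1 f p.1 p.2) (I ×ˢ J) := by
  have hU := hI.prod hJ
  refine ((hf.fderiv_of_isOpen hU le_rfl).clm_apply
    (contDiffOn_const (c := ((1 : ℝ), (0 : ℝ))))).congr ?_
  rintro ⟨y, u⟩ hp
  have hF := ((hf.differentiableOn (by simp)).differentiableAt (hU.mem_nhds hp)).hasFDerivAt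
  exact (hF.comp_hasDerivAt y ((hasDerivAt_id y).prodMk (hasDerivAt_const y u))).deriv

theorem pd1_congr (hI : IsOpen I) (h : ∀ y ∈ I, ∀ u ∈ J, f y u = g y u) :
    ∀ y ∈ I, ∀ u ∈ J, pd1 f y u = pd1 g y u := fun _ hy u hu =>
  EventuallyEq.deriv_eq (eventually_of_mem (hI.mem_nhds hy) fun s hs => h s hs u hu)

theorem pd2_congr (hJ : IsOpen J) (h : ∀ y ∈ I, ∀ u ∈ J, f y u = g y u) :
    ∀ y ∈ I, ∀ u ∈ J, pd2 f y u = pd2 g y u := fun y hy _ hu =>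
  EventuallyEq.deriv_eq (eventually_of_mem (hJ.mem_nhds hu) fun v hv => h y hy v hv)

end Partials

section ODE

variable {I : Set ℝ} {g : ℝ → ℝ}

theorem exists_rpow_eq_affine_of_ode (hI : IsOpen I) (hI' : IsPreconnected I) (p : ℝ)
    (hg : ContDiffOn ℝ 2 g I) (hpos : ∀ x ∈ I, 0 < g x)
    (hode : ∀ x ∈ I, g x * deriv (deriv g) x = (1 - p) * deriv g x ^ 2) :
    ∃ a b, ∀ x ∈ I, g x ^ p = a * x + b := by
  obtain ⟨hg₁, -, hg'⟩ := (contDiffOn_succ_iff_deriv_of_isOpen (n := 1) hI).1 hg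
  have hd : ∀ x ∈ I, HasDerivAt g (deriv g x) x := fun x hx =>
    (hg₁.differentiableAt (hI.mem_nhds hx)).hasDerivAt
  have hd' : ∀ x ∈ I, HasDerivAt (deriv g) (deriv (deriv g) x) x := fun x hx =>
    ((hg'.differentiableOn one_ne_zero).differentiableAt (hI.mem_nhds hx)).hasDerivAt
  set q : ℝ → ℝ := fun x => deriv g x * p * g x ^ (p - 1)
  have hq : ∀ x ∈ I, HasDerivAt (fun x => g x ^ p) (q x) x := fun x hx =>
    (hd x hx).rpow_const (Or.inl (hpos x hx).ne')
  -- `(g ^ p)'' = p g ^ (p - 2) (g g'' + (p - 1) g' ^ 2)`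
  have hq' : ∀ x ∈ I, HasDerivAt q 0 x := by
    intro x hx
    have hgx := (hpos x hx).ne'
    refine (((hd' x hx).mul_const p).mul ((hd x hx).rpow_const (p := p - 1)
      (Or.inl hgx))).congr_deriv ?_
    rw [Real.rpow_sub_one hgx (p - 1)]
    field_simp
    linear_combination (p * g x ^ (p - 1)) * hode x hx
  obtain ⟨a, ha⟩ := hI.exists_is_const_of_deriv_eq_zero hI'
    (fun x hx => (hq' x hx).differentiableAt.differentiableWithinAt) (fun x hx => (hq' x hx).deriv)
  obtain ⟨b, hb⟩ := hI.exists_eq_add_of_deriv_eq hI' (g := fun x => a * x)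
    (fun x hx => (hq x hx).differentiableAt.differentiableWithinAt)
    (differentiableOn_id.const_mul a) (fun x hx => by simp [(hq x hx).deriv, ha x hx])
  exact ⟨a, b, hb⟩

theorem exists_eq_mul_sub_pow_of_ode (hI : IsOpen I) (hI' : IsPreconnected I) {n : ℕ}
    (hn : n ≠ 0) (hg : ContDiffOn ℝ 2 g I) (hpos : ∀ x ∈ I, 0 < g x)
    (hode : ∀ x ∈ I, g x * deriv (deriv g) x = ((n : ℝ) - 1) / n * deriv g x ^ 2)
    {x₀ : ℝ} (hx₀ : x₀ ∈ I) (hg' : deriv g x₀ ≠ 0) :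
    ∃ a c, a ≠ 0 ∧ ∀ x ∈ I, g x = (a * (x - c)) ^ n := by
  obtain ⟨a, b, hab⟩ := exists_rpow_eq_affine_of_ode hI hI' (n : ℝ)⁻¹ hg hpos fun x hx => by
    rw [hode x hx]
    field_simp
  have hg_eq : ∀ x ∈ I, g x = (a * x + b) ^ n := fun x hx => by
    rw [← hab x hx, Real.rpow_inv_natCast_pow (hpos x hx).le hn]
  have ha : a ≠ 0 := by
    rintro rfl
    refine hg' ?_
    have hconst : g =ᶠ[𝓝 x₀] fun _ => b ^ n :=
      eventually_of_mem (hI.mem_nhds hx₀) fun x hx => by simpa using hg_eq x hx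
    rw [hconst.deriv_eq, deriv_const]
  refine ⟨a, -b / a, ha, fun x hx => ?_⟩
  rw [hg_eq x hx]
  congr 1
  field_simp
  ring

end ODE

theorem mul_eq_mul_of_mul_pd2_pd1_eq {I J : Set ℝ} {f : ℝ → ℝ → ℝ} (hI : IsOpen I)
    (hI' : IsPreconnected I) (hJ : IsOpen J) (hJ' : IsPreconnected J)
    (hf : ContDiffOn ℝ 2 (fun p : ℝ × ℝ => f p.1 p.2) (I ×ˢ J))
    (hf0 : ∀ y ∈ I, ∀ u ∈ J, f y u ≠ 0)
    (hmix : ∀ y ∈ I, ∀ u ∈ J, f y u * pd2 (pd1 f) y u = pd1 f y u * pd2 f y u)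
    {y₀ u₀ : ℝ} (hy₀ : y₀ ∈ I) (hu₀ : u₀ ∈ J) :
    ∀ y ∈ I, ∀ u ∈ J, f y u * f y₀ u₀ = f y₀ u * f y u₀ := by
  have hf₁ : ContDiffOn ℝ 1 (fun p : ℝ × ℝ => f p.1 p.2) (I ×ˢ J) := hf.of_le one_le_two
  -- `f f_yu = f_y f_u` says that `∂_u (f_y / f) = 0`
  have hlog : ∀ y ∈ I, ∀ u ∈ J, pd1 f y u * f y u₀ = f y u * pd1 f y u₀ := by
    intro y hy u hu
    have hconst : ∀ v ∈ J, HasDerivAt (fun v => pd1 f y v / f y v) 0 v := fun v hv =>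
      ((hasDerivAt_pd2 (contDiffOn_pd1 hI hJ hf) hJ hy hv).div (hasDerivAt_pd2 hf₁ hJ hy hv)
        (hf0 y hy v hv)).congr_deriv (by rw [mul_comm, hmix y hy v hv, sub_self, zero_div])
    have := hJ.eq_of_hasDerivAt_zero hJ' hconst hu hu₀
    field_simp [hf0 y hy u hu, hf0 y hy u₀ hu₀] at this
    linear_combination this
  intro y hy u hu
  have hconst : ∀ x ∈ I, HasDerivAt (fun x => f x u / f x u₀) 0 x := fun x hx =>
    ((hasDerivAt_pd1 hf₁ hI hx hu).div (hasDerivAt_pd1 hf₁ hI hx hu₀)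
      (hf0 x hx u₀ hu₀)).congr_deriv (by rw [hlog x hx u hu, sub_self, zero_div])
  have := hI.eq_of_hasDerivAt_zero hI' hconst hy hy₀
  field_simp [hf0 y hy u₀ hu₀, hf0 y₀ hy₀ u₀ hu₀] at this
  linear_combination this

section Separated

variable (φ ψ : ℝ → ℝ) {y u : ℝ}

theorem pd1_separated : pd1 (fun y u => φ u * ψ y) = fun y u => φ u * deriv ψ y := by
  ext y u
  simp only [pd1, deriv_const_mul_field']

theorem pd2_separated : pd2 (fun y u => φ u * ψ y) = fun y u => deriv φ u * ψ y := by
  ext y u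
  simp only [pd2, deriv_mul_const_field']

variable {φ ψ}

theorem J21_separated (hφ : φ u ≠ 0) :
    J21 (fun y u => φ u * ψ y) y u = ψ y * deriv (deriv ψ) y / deriv ψ y ^ 2 := by
  simp only [J21, pd1_separated]
  field_simp

theorem J22_separated (hφ : φ u ≠ 0) (hφ' : deriv φ u ≠ 0) (hψ : ψ y ≠ 0)
    (hψ' : deriv ψ y ≠ 0) : J22 (fun y u => φ u * ψ y) y u = 1 := by
  simp only [J22, pd1_separated, pd2_separated]
  field_simp

theorem J31_separated (hφ : φ u ≠ 0) :
    J31 (fun y u => φ u * ψ y) y u = ψ y ^ 2 * deriv (deriv (deriv ψ)) y / deriv ψ y ^ 3 := by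
  simp only [J31, pd1_separated]
  field_simp

theorem J32_separated (hφ : φ u ≠ 0) (hφ' : deriv φ u ≠ 0) (hψ : ψ y ≠ 0) :
    J32 (fun y u => φ u * ψ y) y u = ψ y * deriv (deriv ψ) y / deriv ψ y ^ 2 := by
  simp only [J32, pd1_separated, pd2_separated]
  field_simp

theorem J33_separated (hφ' : deriv φ u ≠ 0) (hψ : ψ y ≠ 0) (hψ' : deriv ψ y ≠ 0) :
    J33 (fun y u => φ u * ψ y) y u = 0 := by
  simp only [J33, J22, pd1_separated, pd2_separated]
  field_simp
  ring

end Separated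

section Power

theorem iterate_deriv_comp_sub_const (g : ℝ → ℝ) (c : ℝ) (k : ℕ) :
    deriv^[k] (fun x => g (x - c)) = fun x => deriv^[k] g (x - c) := by
  induction k with
  | zero => rfl
  | succ k ih =>
    ext x
    rw [Function.iterate_succ_apply', ih, deriv_comp_sub_const, Function.iterate_succ_apply']

theorem sub_pow_mul_iterate_deriv (c : ℝ) (n k : ℕ) (y : ℝ) :
    (y - c) ^ k * deriv^[k] (fun x => (x - c) ^ n) y
      = (∏ i ∈ Finset.range k, ((n : ℝ) - i)) * (y - c) ^ n := by
  simp only [iterate_deriv_comp_sub_const (· ^ n), iter_deriv_pow]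
  rw [mul_left_comm]
  rcases le_or_gt k n with hkn | hnk
  · rw [← pow_add, Nat.add_sub_cancel' hkn]
  · rw [Finset.prod_eq_zero (Finset.mem_range.2 hnk) (sub_self _), zero_mul, zero_mul]

variable {c y : ℝ} {n : ℕ}

theorem sub_pow_deriv_ratios (hn : n ≠ 0) (hy : y - c ≠ 0) :
    let ψ := fun x => (x - c) ^ n
    deriv ψ y ≠ 0 ∧
      ψ y * deriv (deriv ψ) y / deriv ψ y ^ 2 = ((n : ℝ) - 1) / n ∧
      ψ y ^ 2 * deriv (deriv (deriv ψ)) y / deriv ψ y ^ 3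
        = ((n : ℝ) ^ 2 - 3 * n + 2) / (n : ℝ) ^ 2 := by
  intro ψ
  have hn' : (n : ℝ) ≠ 0 := Nat.cast_ne_zero.2 hn
  have hψ : ψ y ≠ 0 := pow_ne_zero n hy
  have h k : (y - c) ^ k * deriv^[k] ψ y = (∏ i ∈ Finset.range k, ((n : ℝ) - i)) * ψ y :=
    sub_pow_mul_iterate_deriv c n k y
  have h1 : (y - c) * deriv ψ y = n * ψ y := by simpa using h 1
  have h2 : (y - c) ^ 2 * deriv (deriv ψ) y = n * (n - 1) * ψ y := by
    simpa [Finset.prod_range_succ] using h 2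
  have h3 : (y - c) ^ 3 * deriv (deriv (deriv ψ)) y = n * (n - 1) * (n - 2) * ψ y := by
    simpa [Finset.prod_range_succ] using h 3
  have hψ' : deriv ψ y ≠ 0 := by
    intro h
    rw [h, mul_zero] at h1
    exact mul_ne_zero hn' hψ h1.symm
  refine ⟨hψ', ?_, ?_⟩
  · rw [div_eq_div_iff (pow_ne_zero 2 hψ') hn']
    refine mul_left_cancel₀ (pow_ne_zero 2 hy) ?_
    linear_combination (n * ψ y) * h2 - (n - 1) * ((y - c) * deriv ψ y + n * ψ y) * h1
  · rw [div_eq_div_iff (pow_ne_zero 3 hψ') (pow_ne_zero 2 hn')]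
    refine mul_left_cancel₀ (pow_ne_zero 3 hy) ?_
    linear_combination (n ^ 2 * ψ y ^ 2) * h3 - (n ^ 2 - 3 * n + 2) *
      (((y - c) * deriv ψ y) ^ 2 + (y - c) * deriv ψ y * (n * ψ y) + (n * ψ y) ^ 2) * h1

end Power

theorem invariants_congr {I J : Set ℝ} {f g : ℝ → ℝ → ℝ} (hI : IsOpen I) (hJ : IsOpen J)
    (h : ∀ y ∈ I, ∀ u ∈ J, f y u = g y u) {y u : ℝ} (hy : y ∈ I) (hu : u ∈ J) :
    J21 f y u = J21 g y u ∧ J22 f y u = J22 g y u ∧ J31 f y u = J31 g y u ∧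
      J32 f y u = J32 g y u ∧ J33 f y u = J33 g y u := by
  have h1 := pd1_congr hI h
  have h11 := pd1_congr hI h1
  have h2 := pd2_congr hJ h
  have h21 := pd2_congr hJ h1
  simp only [J21, J22, J31, J32, J33, h y hy u hu, h1 y hy u hu, h11 y hy u hu,
    pd1_congr hI h11 y hy u hu, h2 y hy u hu, h21 y hy u hu, pd2_congr hJ h11 y hy u hu,
    pd2_congr hJ h2 y hy u hu, pd2_congr hJ h21 y hy u hu, and_self]

theorem invariants_of_eq_mul_sub_pow {I J : Set ℝ} {f : ℝ → ℝ → ℝ} (hI : IsOpen I)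
    (hJ : IsOpen J) {α : ℝ → ℝ} {c : ℝ} {n : ℕ} (hn : n ≠ 0)
    (hform : ∀ y ∈ I, ∀ u ∈ J, f y u = (α u * (y - c)) ^ n)
    (hf0 : ∀ y ∈ I, ∀ u ∈ J, f y u ≠ 0) (hfu : ∀ y ∈ I, ∀ u ∈ J, pd2 f y u ≠ 0)
    {y u : ℝ} (hy : y ∈ I) (hu : u ∈ J) :
    J21 f y u = ((n : ℝ) - 1) / n ∧ J22 f y u = 1 ∧
      J31 f y u = ((n : ℝ) ^ 2 - 3 * n + 2) / (n : ℝ) ^ 2 ∧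
      J32 f y u = ((n : ℝ) - 1) / n ∧ J33 f y u = 0 := by
  set φ : ℝ → ℝ := fun u => α u ^ n
  set ψ : ℝ → ℝ := fun y => (y - c) ^ n
  have hsep : ∀ y ∈ I, ∀ u ∈ J, f y u = φ u * ψ y := fun y hy u hu => by
    rw [hform y hy u hu, mul_pow]
  obtain ⟨hφ, hψ⟩ := mul_ne_zero_iff.1 (hsep y hy u hu ▸ hf0 y hy u hu)
  have hφ' : deriv φ u ≠ 0 := by
    have := hfu y hy u hu
    rw [pd2_congr hJ hsep y hy u hu, pd2_separated] at this
    exact left_ne_zero_of_mul this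
  obtain ⟨hψ', h21, h31⟩ := sub_pow_deriv_ratios hn ((pow_ne_zero_iff hn).1 hψ)
  obtain ⟨e21, e22, e31, e32, e33⟩ := invariants_congr hI hJ hsep hy hu
  rw [e21, e22, e31, e32, e33, J21_separated hφ, J22_separated hφ hφ' hψ hψ', J31_separated hφ,
    J32_separated hφ hφ' hψ, J33_separated hφ' hψ hψ']
  exact ⟨h21, rfl, h31, h21, rfl⟩

/-- On a product of open intervals where `f > 0` and `f_y, f_u` are nowhere zero, the five
conditions `J21(f) = (n−1)/n`, `J22(f) = 1`, `J31(f) = (n² − 3n + 2)/n²`,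
`J32(f) = (n−1)/n`, `J33(f) = 0` hold identically if and only if
`f(y,u) = (α(u)·(y − c))ⁿ` for some smooth nowhere-zero `α` and constant `c`. -/
theorem power_normal_form_iff (n : ℕ) (hn : 1 ≤ n) (I J : Set ℝ)
    (hIo : IsOpen I) (hIc : Convex ℝ I) (hJo : IsOpen J) (hJc : Convex ℝ J)
    (f : ℝ → ℝ → ℝ)
    (hf : ContDiffOn ℝ (⊤ : ℕ∞) (fun p : ℝ × ℝ => f p.1 p.2) (I ×ˢ J))
    (hfpos : ∀ y ∈ I, ∀ u ∈ J, 0 < f y u)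
    (hfy : ∀ y ∈ I, ∀ u ∈ J, pd1 f y u ≠ 0)
    (hfu : ∀ y ∈ I, ∀ u ∈ J, pd2 f y u ≠ 0) :
    (∀ y ∈ I, ∀ u ∈ J,
        J21 f y u = ((n : ℝ) - 1) / n ∧
        J22 f y u = 1 ∧
        J31 f y u = ((n : ℝ) ^ 2 - 3 * n + 2) / (n : ℝ) ^ 2 ∧
        J32 f y u = ((n : ℝ) - 1) / n ∧
        J33 f y u = 0) ↔
      ∃ (α : ℝ → ℝ) (c : ℝ), ContDiffOn ℝ (⊤ : ℕ∞) α J ∧ (∀ u ∈ J, α u ≠ 0) ∧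
        ∀ y ∈ I, ∀ u ∈ J, f y u = (α u * (y - c)) ^ n := by
  have hn0 : n ≠ 0 := Nat.one_le_iff_ne_zero.1 hn
  have hf0 : ∀ y ∈ I, ∀ u ∈ J, f y u ≠ 0 := fun y hy u hu => (hfpos y hy u hu).ne'
  refine ⟨fun H => ?_, fun ⟨α, c, _, _, hform⟩ y hy u hu =>
    invariants_of_eq_mul_sub_pow hIo hJo hn0 hform hf0 hfu hy hu⟩
  rcases (I ×ˢ J).eq_empty_or_nonempty with hIJ | ⟨⟨y₀, u₀⟩, (hy₀ : y₀ ∈ I), (hu₀ : u₀ ∈ J)⟩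
  · exact ⟨1, 0, contDiffOn_const, fun _ _ => one_ne_zero, fun y hy u hu =>
      absurd (hIJ ▸ mk_mem_prod hy hu) (notMem_empty _)⟩
  have hf₂ : ContDiffOn ℝ 2 (fun p : ℝ × ℝ => f p.1 p.2) (I ×ˢ J) :=
    hf.of_le (WithTop.coe_le_coe.2 le_top)
  have hsplit := mul_eq_mul_of_mul_pd2_pd1_eq hIo hIc.isPreconnected hJo hJc.isPreconnected hf₂
    hf0 (fun y hy u hu => (div_eq_one_iff_eq (mul_ne_zero (hfy y hy u hu) (hfu y hy u hu))).1
      (H y hy u hu).2.1) hy₀ hu₀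
  obtain ⟨a, c, ha, hpow⟩ := exists_eq_mul_sub_pow_of_ode hIo hIc.isPreconnected hn0
    (hf₂.slice_fst hu₀) (fun y hy => hfpos y hy u₀ hu₀)
    (fun y hy => (div_eq_iff (pow_ne_zero 2 (hfy y hy u₀ hu₀))).1 (H y hy u₀ hu₀).1) hy₀
    (hfy y₀ hy₀ u₀ hu₀)
  have hφ : ∀ u ∈ J, 0 < f y₀ u / f y₀ u₀ := fun u hu =>
    div_pos (hfpos y₀ hy₀ u hu) (hfpos y₀ hy₀ u₀ hu₀)
  refine ⟨fun u => (f y₀ u / f y₀ u₀) ^ (n⁻¹ : ℝ) * a, c,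
    (((hf.slice_snd hy₀).div_const _).rpow_const_of_ne fun u hu => (hφ u hu).ne').mul
      contDiffOn_const,
    fun u hu => mul_ne_zero (Real.rpow_pos_of_pos (hφ u hu) _).ne' ha, fun y hy u hu => ?_⟩
  rw [mul_assoc, mul_pow, Real.rpow_inv_natCast_pow (hφ u hu).le hn0, ← hpow y hy,
    div_mul_eq_mul_div, eq_div_iff (hf0 y₀ hy₀ u₀ hu₀)]
  exact hsplit y hy u hu
end

section
/- Let f : V → ℝ be smooth on an open set V ⊆ ℝ² with f, f_y and f_u nowhere zero on V. Set J22 = f·f_{yu}/(f_y·f_u), J33 = f²·f_{yuu}/(f_u²·f_y) − J22·f·f_{uu}/f_u², and J44 = f³·f_{yuuu}/(f_y·f_u³) − 3·J33·f·f_{uu}/f_u² − J22·f²·f_{uuu}/f_u³. Then, on V, (f/f_u)·∂_u(J33) = 2·J33 − J22·J33 + J44; i.e. ∇₂(J33) = 2·J33 − J22·J33 + J44. -/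
/-!
Each `u`-derivative of a partial derivative of `f` is again one, so the product and quotient
rules express `∂_u J33` as a rational function of `f, f_y, f_u, f_yu, f_uu, f_yuu, f_uuu, f_yuuu`
with denominators powers of `f_y` and `f_u`; once these are cleared, the syzygy is a polynomial
identity.
-/

section PartialDerivatives

variable {V : Set (ℝ × ℝ)} {g : ℝ → ℝ → ℝ} {y u : ℝ}

theorem hasDerivAt_fderiv_apply_inl
    (hg : DifferentiableAt ℝ (fun p : ℝ × ℝ => g p.1 p.2) (y, u)) :
    HasDerivAt (fun s => g s u) (fderiv ℝ (fun p : ℝ × ℝ => g p.1 p.2) (y, u) (1, 0)) y := by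
  simpa [Function.comp_def] using (hg.hasFDerivAt.comp y (hasFDerivAt_prodMk_left y u)).hasDerivAt

theorem hasDerivAt_fderiv_apply_inr
    (hg : DifferentiableAt ℝ (fun p : ℝ × ℝ => g p.1 p.2) (y, u)) :
    HasDerivAt (g y) (fderiv ℝ (fun p : ℝ × ℝ => g p.1 p.2) (y, u) (0, 1)) u := by
  simpa [Function.comp_def] using (hg.hasFDerivAt.comp u (hasFDerivAt_prodMk_right y u)).hasDerivAt

theorem hasDerivAt_pd2_s19 (hg : DifferentiableAt ℝ (fun p : ℝ × ℝ => g p.1 p.2) (y, u)) :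
    HasDerivAt (g y) (pd2 g y u) u :=
  (hasDerivAt_fderiv_apply_inr hg).differentiableAt.hasDerivAt

theorem contDiffOn_pd1_s19 (hV : IsOpen V)
    (hg : ContDiffOn ℝ (⊤ : ℕ∞) (fun p : ℝ × ℝ => g p.1 p.2) V) :
    ContDiffOn ℝ (⊤ : ℕ∞) (fun p : ℝ × ℝ => pd1 g p.1 p.2) V :=
  ((hg.fderiv_of_isOpen hV (mod_cast le_top)).clm_apply contDiffOn_const).congr fun _ hp =>
    (hasDerivAt_fderiv_apply_inl
      ((hg.differentiableOn (by simp)).differentiableAt (hV.mem_nhds hp))).deriv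

theorem contDiffOn_pd2 (hV : IsOpen V)
    (hg : ContDiffOn ℝ (⊤ : ℕ∞) (fun p : ℝ × ℝ => g p.1 p.2) V) :
    ContDiffOn ℝ (⊤ : ℕ∞) (fun p : ℝ × ℝ => pd2 g p.1 p.2) V :=
  ((hg.fderiv_of_isOpen hV (mod_cast le_top)).clm_apply contDiffOn_const).congr fun _ hp =>
    (hasDerivAt_fderiv_apply_inr
      ((hg.differentiableOn (by simp)).differentiableAt (hV.mem_nhds hp))).deriv

end PartialDerivatives

theorem nabla2_J33_general (V : Set (ℝ × ℝ)) (hV : IsOpen V) (f : ℝ → ℝ → ℝ)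
    (hf : ContDiffOn ℝ (⊤ : ℕ∞) (fun p : ℝ × ℝ => f p.1 p.2) V)
    (hfy : ∀ y u : ℝ, (y, u) ∈ V → pd1 f y u ≠ 0)
    (hfu : ∀ y u : ℝ, (y, u) ∈ V → pd2 f y u ≠ 0) :
    ∀ y u : ℝ, (y, u) ∈ V →
      nab2 f (J33 f) y u = 2 * J33 f y u - J22 f y u * J33 f y u + J44 f y u := by
  intro y u h
  have hd {g : ℝ → ℝ → ℝ}
      (hg : ContDiffOn ℝ (⊤ : ℕ∞) (fun p : ℝ × ℝ => g p.1 p.2) V) : HasDerivAt (g y) (pd2 g y u) u :=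
    hasDerivAt_pd2_s19 ((hg.differentiableOn (by simp)).differentiableAt (hV.mem_nhds h))
  have hf_y := contDiffOn_pd1_s19 hV hf
  have hf_u := contDiffOn_pd2 hV hf
  have hf_yu := contDiffOn_pd2 hV hf_y
  have hf_uu := contDiffOn_pd2 hV hf_u
  have hf_yuu := contDiffOn_pd2 hV hf_yu
  have hfy := hfy y u h
  have hfu := hfu y u h
  have hJ22 := ((hd hf).mul (hd hf_yu)).div ((hd hf_y).mul (hd hf_u)) (mul_ne_zero hfy hfu)
  have hJ33 : HasDerivAt (J33 f y) _ u :=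
    (((hd hf).pow 2).mul (hd hf_yuu)).div (((hd hf_u).pow 2).mul (hd hf_y))
        (mul_ne_zero (pow_ne_zero 2 hfu) hfy)
      |>.sub (hJ22.mul (((hd hf).mul (hd hf_uu)).div ((hd hf_u).pow 2) (pow_ne_zero 2 hfu)))
  rw [nab2, show pd2 (J33 f) y u = _ from hJ33.deriv]
  simp only [J33, J22, J44, Pi.mul_apply, Pi.div_apply, Pi.pow_apply]
  field_simp
  ring

/-- The syzygy `∇₂(J33) = 2·J33 − J22·J33 + J44` on an open set where `f`, `f_y` and `f_u`
are nowhere zero. -/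
theorem nabla2_J33 (V : Set (ℝ × ℝ)) (hV : IsOpen V) (f : ℝ → ℝ → ℝ)
    (hf : ContDiffOn ℝ (⊤ : ℕ∞) (fun p : ℝ × ℝ => f p.1 p.2) V)
    (hf0 : ∀ y u : ℝ, (y, u) ∈ V → f y u ≠ 0)
    (hfy : ∀ y u : ℝ, (y, u) ∈ V → pd1 f y u ≠ 0)
    (hfu : ∀ y u : ℝ, (y, u) ∈ V → pd2 f y u ≠ 0) :
    ∀ y u : ℝ, (y, u) ∈ V →
      nab2 f (J33 f) y u = 2 * J33 f y u - J22 f y u * J33 f y u + J44 f y u :=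
  nabla2_J33_general V hV f hf hfy hfu
end
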